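/- Let I : F_2^n → {-1,1} denote the (±1-valued) indicator of the Hamming ball of radius 1 centered at 0: I(x) = -1 if |x| ≤ 1 and I(x) = 1 otherwise. Then the spectral norm of I satisfies ‖I‖_1 = Ω(√n). -/

import Mathlib

/-!
Writing `w(S) = ∑ᵢ (-1)^{Sᵢ} = n - 2|S|`, the ball `{0, e₁, …, eₙ}` contributes `1 + w(S)` to
`∑ₓ I(x) χ_S(x)`, so `Î(S) = [S = 0] - 2 (1 + w(S)) / 2ⁿ` and `‖I‖₁ ≥ 2 𝔼|1 + W| - 1`, where
`W = w(S)` for uniform `S` is a sum of `n` independent signs. Its moments are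
`𝔼 (1 + W)² = n + 1` and `𝔼 (1 + W)⁴ = (n + 1)(3n + 1)`, and the interpolation inequality
`(𝔼 X²)³ ≤ (𝔼 |X|)² 𝔼 X⁴` (two applications of Cauchy–Schwarz) gives `𝔼 |1 + W| ≥ √((n + 1) / 3)`.
-/

open Finset Matrix

noncomputable def chi {n : ℕ} (S x : Fin n → ZMod 2) : ℝ :=
  (-1 : ℝ) ^ (∑ i, S i * x i : ZMod 2).val

noncomputable def fhat {n : ℕ} (f : (Fin n → ZMod 2) → ℝ) (S : Fin n → ZMod 2) : ℝ :=
  (∑ x : Fin n → ZMod 2, f x * chi S x) / 2 ^ n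

noncomputable def hamDist {n : ℕ} (f g : (Fin n → ZMod 2) → ℝ) : ℝ :=
  ((Finset.univ.filter fun x => f x ≠ g x).card : ℝ) / 2 ^ n

noncomputable def specNorm {n : ℕ} (f : (Fin n → ZMod 2) → ℝ) : ℝ :=
  ∑ S : Fin n → ZMod 2, |fhat f S|

noncomputable def apxNorm {n : ℕ} (f : (Fin n → ZMod 2) → ℝ) (α : ℝ) : ℝ :=
  sInf {t | ∃ p : (Fin n → ZMod 2) → ℝ, (∀ x, |f x - p x| ≤ α) ∧ t = specNorm p}

noncomputable def linDist {n : ℕ} (f g : (Fin n → ZMod 2) → ℝ) : ℝ :=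
  ⨅ M : GL (Fin n) (ZMod 2),
    hamDist (fun x => f ((M : Matrix (Fin n) (Fin n) (ZMod 2)) *ᵥ x)) g

noncomputable def ballInd (n : ℕ) : (Fin n → ZMod 2) → ℝ := fun x =>
  if (Finset.univ.filter fun i => x i ≠ 0).card ≤ 1 then -1 else 1


lemma zmodTwo_eq_one_of_ne_zero : ∀ {a : ZMod 2}, a ≠ 0 → a = 1 := by decide

noncomputable def zmodTwoSign (a : ZMod 2) : ℝ := (-1) ^ a.val

@[simp] lemma zmodTwoSign_zero : zmodTwoSign 0 = 1 := by simp [zmodTwoSign]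

@[simp] lemma zmodTwoSign_one : zmodTwoSign 1 = -1 := by simp [zmodTwoSign, ZMod.val_one]

lemma zmodTwoSign_add (a b : ZMod 2) : zmodTwoSign (a + b) = zmodTwoSign a * zmodTwoSign b := by
  rw [zmodTwoSign, zmodTwoSign, zmodTwoSign, ZMod.val_add, ← pow_add]
  exact (neg_one_pow_eq_pow_mod_two _).symm

lemma chi_eq_zmodTwoSign_dotProduct {n : ℕ} (S x : Fin n → ZMod 2) :
    chi S x = zmodTwoSign (S ⬝ᵥ x) := rfl

noncomputable def chiAddChar {n : ℕ} (S : Fin n → ZMod 2) : AddChar (Fin n → ZMod 2) ℝ where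
  toFun := chi S
  map_zero_eq_one' := by simp [chi_eq_zmodTwoSign_dotProduct]
  map_add_eq_mul' x y := by
    simp only [chi_eq_zmodTwoSign_dotProduct, dotProduct_add, zmodTwoSign_add]

lemma chi_single {n : ℕ} (S : Fin n → ZMod 2) (i : Fin n) :
    chi S (Pi.single i 1) = zmodTwoSign (S i) := by
  rw [chi_eq_zmodTwoSign_dotProduct, dotProduct_single, mul_one]

lemma sum_chi_of_ne_zero {n : ℕ} {S : Fin n → ZMod 2} (hS : S ≠ 0) :
    ∑ x, chi S x = 0 := by
  obtain ⟨i, hi⟩ := Function.ne_iff.mp hS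
  refine AddChar.sum_eq_zero_of_ne_one (ψ := chiAddChar S)
    (AddChar.ne_one_iff.mpr ⟨Pi.single i 1, ?_⟩)
  change chi S _ ≠ 1
  rw [chi_single, zmodTwo_eq_one_of_ne_zero hi]
  norm_num

lemma sum_abs_sum_chi (n : ℕ) : ∑ S : Fin n → ZMod 2, |∑ x, chi S x| = 2 ^ n := by
  rw [sum_eq_single 0 (fun S _ hS => by rw [sum_chi_of_ne_zero hS, abs_zero])
    (by simp)]
  simp [chi_eq_zmodTwoSign_dotProduct]

lemma hammingNorm_le_one_iff {ι : Type*} [Fintype ι] [DecidableEq ι] {x : ι → ZMod 2} :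
    hammingNorm x ≤ 1 ↔ x = 0 ∨ ∃ i, x = Pi.single i 1 := by
  constructor
  · intro hx
    by_cases h0 : x = 0
    · exact Or.inl h0
    obtain ⟨i, hi⟩ := Function.ne_iff.mp h0
    refine Or.inr ⟨i, funext fun j => ?_⟩
    rcases eq_or_ne j i with rfl | hji
    · simp [zmodTwo_eq_one_of_ne_zero hi]
    · rw [Pi.single_eq_of_ne hji]
      by_contra hj
      exact hji (Finset.card_le_one.mp hx j (by simpa using hj) i (by simpa using hi))
  · rintro (rfl | ⟨i, rfl⟩)
    · simp
    · exact Finset.card_le_one.mpr fun a ha b hb => by simp_all [Pi.single_apply]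

lemma single_one_left_injective {ι M : Type*} [DecidableEq ι] [Zero M] [One M] [NeZero (1 : M)] :
    Function.Injective fun i : ι => (Pi.single i 1 : ι → M) := fun i j h => by
  simpa [Pi.single_apply, eq_comm] using congrFun h j

noncomputable def signSum {n : ℕ} (S : Fin n → ZMod 2) : ℝ := ∑ i, zmodTwoSign (S i)

lemma sum_chi_hammingNorm_le_one {n : ℕ} (S : Fin n → ZMod 2) :
    ∑ x with hammingNorm x ≤ 1, chi S x = 1 + signSum S := by
  have hball : ({x | hammingNorm x ≤ 1} : Finset (Fin n → ZMod 2)) =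
      insert 0 (univ.image fun i => Pi.single i 1) := by
    ext x
    simp [hammingNorm_le_one_iff, eq_comm]
  have h0 : (0 : Fin n → ZMod 2) ∉ univ.image fun i => Pi.single i 1 := by simp
  rw [hball, sum_insert h0, sum_image fun i _ j _ h => single_one_left_injective h, signSum]
  simp [chi_eq_zmodTwoSign_dotProduct]

lemma ballInd_apply {n : ℕ} (x : Fin n → ZMod 2) :
    ballInd n x = if hammingNorm x ≤ 1 then -1 else 1 := rfl

lemma fhat_ballInd {n : ℕ} (S : Fin n → ZMod 2) :
    fhat (ballInd n) S = (∑ x, chi S x - 2 * (1 + signSum S)) / 2 ^ n := by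
  have h : ∀ x, ballInd n x * chi S x =
      chi S x - 2 * (if hammingNorm x ≤ 1 then chi S x else 0) := by
    intro x
    rw [ballInd_apply]
    split_ifs <;> ring
  rw [fhat, ← sum_chi_hammingNorm_le_one, sum_filter, mul_sum, ← sum_sub_distrib]
  simp_rw [h]

lemma le_specNorm_ballInd (n : ℕ) :
    2 * (∑ S : Fin n → ZMod 2, |1 + signSum S|) / 2 ^ n - 1 ≤ specNorm (ballInd n) := by
  have hterm : ∀ S : Fin n → ZMod 2,
      (2 * |1 + signSum S| - |∑ x, chi S x|) / 2 ^ n ≤ |fhat (ballInd n) S| := by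
    intro S
    rw [fhat_ballInd, abs_div, abs_of_pos (by positivity : (0 : ℝ) < 2 ^ n)]
    gcongr
    calc 2 * |1 + signSum S| - |∑ x, chi S x|
        = |2 * (1 + signSum S)| - |∑ x, chi S x| := by rw [abs_mul, abs_two]
      _ ≤ |2 * (1 + signSum S) - ∑ x, chi S x| := abs_sub_abs_le_abs_sub _ _
      _ = _ := abs_sub_comm _ _
  calc 2 * (∑ S : Fin n → ZMod 2, |1 + signSum S|) / 2 ^ n - 1
      = ∑ S : Fin n → ZMod 2, (2 * |1 + signSum S| - |∑ x, chi S x|) / 2 ^ n := by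
        rw [← sum_div, sum_sub_distrib, sum_abs_sum_chi, ← mul_sum, sub_div,
          div_self (by positivity)]
    _ ≤ specNorm (ballInd n) := sum_le_sum fun S _ => hterm S

lemma sum_sq_pow_three_le_sq_sum_abs_mul_sum_pow_four {ι R : Type*} [Field R] [LinearOrder R]
    [IsStrictOrderedRing R] (s : Finset ι) (f : ι → R) :
    (∑ i ∈ s, f i ^ 2) ^ 3 ≤ (∑ i ∈ s, |f i|) ^ 2 * ∑ i ∈ s, f i ^ 4 := by
  set A := ∑ i ∈ s, |f i|
  set B := ∑ i ∈ s, f i ^ 2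
  set C := ∑ i ∈ s, f i ^ 4
  set D := ∑ i ∈ s, |f i| ^ 3
  have hB : 0 ≤ B := sum_nonneg fun i _ => sq_nonneg _
  have hC : 0 ≤ C := sum_nonneg fun i _ => by positivity
  have hBAD : B ^ 2 ≤ A * D := sum_sq_le_sum_mul_sum_of_sq_le_mul s
    (fun i _ => abs_nonneg _) (fun i _ => by positivity) fun i _ =>
      le_of_eq (by rw [← sq_abs (f i)]; ring)
  have hDBC : D ^ 2 ≤ B * C := sum_sq_le_sum_mul_sum_of_sq_le_mul s
    (fun i _ => sq_nonneg _) (fun i _ => by positivity) fun i _ =>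
      le_of_eq (by rw [show f i ^ 4 = (f i ^ 2) ^ 2 by ring, ← sq_abs (f i)]; ring)
  have : B * B ^ 3 ≤ B * (A ^ 2 * C) := by
    calc B * B ^ 3 = (B ^ 2) ^ 2 := by ring
      _ ≤ (A * D) ^ 2 := pow_le_pow_left₀ (sq_nonneg B) hBAD 2
      _ = A ^ 2 * D ^ 2 := by ring
      _ ≤ A ^ 2 * (B * C) := mul_le_mul_of_nonneg_left hDBC (sq_nonneg A)
      _ = B * (A ^ 2 * C) := by ring
  rcases hB.eq_or_lt with hB0 | hBpos
  · rw [← hB0, zero_pow three_ne_zero]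
    exact mul_nonneg (sq_nonneg A) hC
  · exact le_of_mul_le_mul_left this hBpos

lemma sum_signSum_succ {n : ℕ} (F : ℝ → ℝ) :
    ∑ S : Fin (n + 1) → ZMod 2, F (signSum S) =
      ∑ s : Fin n → ZMod 2, (F (1 + signSum s) + F (-1 + signSum s)) := by
  have sum_zmodTwo : ∀ g : ZMod 2 → ℝ, ∑ a, g a = g 0 + g 1 := fun g => Fin.sum_univ_two g
  rw [← (Fin.consEquiv fun _ => ZMod 2).sum_comp, Fintype.sum_prod_type, sum_zmodTwo,
    ← sum_add_distrib]
  simp [signSum, Fin.sum_univ_succ]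

lemma sum_add_signSum_sq (n : ℕ) (c : ℝ) :
    ∑ S : Fin n → ZMod 2, (c + signSum S) ^ 2 = 2 ^ n * (c ^ 2 + n) := by
  induction n generalizing c with
  | zero => simp [signSum]
  | succ n ih =>
    rw [sum_signSum_succ fun w => (c + w) ^ 2]
    simp only [← add_assoc]
    rw [sum_add_distrib, ih, ih]
    push_cast
    ring

lemma sum_add_signSum_pow_four (n : ℕ) (c : ℝ) :
    ∑ S : Fin n → ZMod 2, (c + signSum S) ^ 4 =
      2 ^ n * (c ^ 4 + 6 * n * c ^ 2 + 3 * n ^ 2 - 2 * n) := by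
  induction n generalizing c with
  | zero => simp [signSum]
  | succ n ih =>
    rw [sum_signSum_succ fun w => (c + w) ^ 4]
    simp only [← add_assoc]
    rw [sum_add_distrib, ih, ih]
    push_cast
    ring

lemma four_pow_eq_sq_two_pow (n : ℕ) : (4 : ℝ) ^ n = (2 ^ n) ^ 2 := by
  rw [← pow_right_comm]; norm_num

lemma four_pow_mul_le_three_mul_sq_sum_abs_one_add_signSum (n : ℕ) :
    4 ^ n * (n + 1) ≤ 3 * (∑ S : Fin n → ZMod 2, |1 + signSum S|) ^ 2 := by
  set A := ∑ S : Fin n → ZMod 2, |1 + signSum S|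
  have h := sum_sq_pow_three_le_sq_sum_abs_mul_sum_pow_four univ
    fun S : Fin n → ZMod 2 => 1 + signSum S
  rw [sum_add_signSum_sq, sum_add_signSum_pow_four] at h
  have hpos : (0 : ℝ) < 2 ^ n * (n + 1) := by positivity
  have key : (2 ^ n) ^ 2 * ((n : ℝ) + 1) ^ 2 ≤ A ^ 2 * (3 * n + 1) := by
    refine le_of_mul_le_mul_left ?_ hpos
    calc 2 ^ n * ((n : ℝ) + 1) * ((2 ^ n) ^ 2 * (n + 1) ^ 2)
        = (2 ^ n * (1 ^ 2 + n)) ^ 3 := by ring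
      _ ≤ _ := h
      _ = 2 ^ n * ((n : ℝ) + 1) * (A ^ 2 * (3 * n + 1)) := by ring
  refine le_of_mul_le_mul_right ?_ (by positivity : (0 : ℝ) < 3 * n + 1)
  calc 4 ^ n * ((n : ℝ) + 1) * (3 * n + 1) ≤ (2 ^ n) ^ 2 * (n + 1) * (3 * (n + 1)) := by
        rw [four_pow_eq_sq_two_pow]; gcongr; linarith
    _ = 3 * ((2 ^ n) ^ 2 * (n + 1) ^ 2) := by ring
    _ ≤ 3 * (A ^ 2 * (3 * n + 1)) := by gcongr
    _ = 3 * A ^ 2 * (3 * n + 1) := by ring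

lemma four_mul_le_three_mul_sq_specNorm_ballInd_add_one (n : ℕ) :
    4 * ((n : ℝ) + 1) ≤ 3 * (specNorm (ballInd n) + 1) ^ 2 := by
  have hA := four_pow_mul_le_three_mul_sq_sum_abs_one_add_signSum n
  have hs := le_specNorm_ballInd n
  set A := ∑ S : Fin n → ZMod 2, |1 + signSum S|
  have hP : (0 : ℝ) < 2 ^ n := by positivity
  have hlow : 0 ≤ 2 * A / 2 ^ n := by positivity
  calc 4 * ((n : ℝ) + 1) = 4 * (4 ^ n * (n + 1)) / (2 ^ n) ^ 2 := by
        rw [four_pow_eq_sq_two_pow]; field_simp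
    _ ≤ 4 * (3 * A ^ 2) / (2 ^ n) ^ 2 := by gcongr
    _ = 3 * (2 * A / 2 ^ n) ^ 2 := by ring
    _ ≤ 3 * (specNorm (ballInd n) + 1) ^ 2 := by gcongr; linarith

theorem stmt17 : ∃ c : ℝ, 0 < c ∧ ∀ n : ℕ, c * Real.sqrt n ≤ specNorm (ballInd n) := by
  refine ⟨1 / 2, by norm_num, fun n => ?_⟩
  have hs : 0 ≤ specNorm (ballInd n) := sum_nonneg fun S _ => abs_nonneg _
  have h := four_mul_le_three_mul_sq_specNorm_ballInd_add_one n
  have ht := Real.sq_sqrt (Nat.cast_nonneg (α := ℝ) n)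
  by_contra! hlt
  -- `s < t / 2` with `t = √n` would give `4 (t² + 1) ≤ 3 (s + 1)² < 3 (t / 2 + 1)²`
  nlinarith [sq_nonneg (Real.sqrt n - 6 / 13),
    mul_pos (sub_pos.2 hlt) (by positivity : 0 < 1 / 2 * Real.sqrt n + specNorm (ballInd n) + 2)]
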